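/- arXiv:1812.03561 — 2 statements merged into one kernel-verified Lean document; each statement's English description precedes it below -/
import Mathlib

section
/- Let X and Y be real Banach spaces, U ⊆ X and V ⊆ Y nonempty open subsets, and let g : U → V and f : V → U be inverse homeomorphisms. Let x ∈ U and y = g(x). Assume g is Fréchet differentiable at x with Fréchet derivative dg_x : X → Y, and that f is Lipschitz on V. Then the image dg_x(X) is dense in Y. -/
/-!
Fix `v : Y`. For small `t` the point `g x + t • v` lies in `V`, so it lifts through `f` to the curve
`c t = f (g x + t • v)`, and the Lipschitz bound gives `‖c t - x‖ ≤ K ‖v‖ |t|`. Differentiability of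
`g` at `x` then yields `t • v - dgx (c t - x) = o(‖c t - x‖) = o(t)`, so
`dgx (t⁻¹ • (c t - x)) → v` as `t → 0`, and `v` lies in the closure of the range of `dgx`.
-/

open Filter Topology Asymptotics

theorem mem_closure_range_of_hasFDerivAt_of_lift {𝕜 E F : Type*} [NontriviallyNormedField 𝕜]
    [NormedAddCommGroup E] [NormedSpace 𝕜 E] [NormedAddCommGroup F] [NormedSpace 𝕜 F]
    {g : E → F} {L : E →L[𝕜] F} {x : E} (hg : HasFDerivAt g L x) {v : F} {c : 𝕜 → E}
    (hc : (fun t => c t - x) =O[𝓝 0] id) (hlift : ∀ᶠ t in 𝓝 0, g (c t) = g x + t • v) :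
    v ∈ closure (Set.range L) := by
  have hcx : Tendsto c (𝓝 0) (𝓝 x) := by
    simpa using (hc.trans_tendsto tendsto_id).add_const x
  have hrem : (fun t : 𝕜 => t • v - L (c t - x)) =o[𝓝 0] id := by
    refine ((hg.isLittleO.comp_tendsto hcx).trans_isBigO hc).congr' ?_ EventuallyEq.rfl
    filter_upwards [hlift] with t ht
    simp [ht]
  have hquot : Tendsto (fun t : 𝕜 => L (t⁻¹ • (c t - x))) (𝓝[≠] 0) (𝓝 v) := by
    have hratio := hrem.tendsto_inv_smul_nhds_zero.mono_left (nhdsWithin_le_nhds (s := {0}ᶜ))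
    refine (sub_zero v ▸ hratio.const_sub v).congr' ?_
    filter_upwards [self_mem_nhdsWithin] with t (ht : t ≠ 0)
    simp [smul_sub, inv_smul_smul₀ ht]
  exact mem_closure_of_tendsto hquot (Eventually.of_forall fun t => Set.mem_range_self _)

theorem IsOpen.eventually_add_smul_mem {F : Type*} [NormedAddCommGroup F] [NormedSpace ℝ F]
    {V : Set F} (hV : IsOpen V) {y : F} (hy : y ∈ V) (v : F) :
    ∀ᶠ t : ℝ in 𝓝 0, y + t • v ∈ V := by
  have hline : Tendsto (fun t : ℝ => y + t • v) (𝓝 0) (𝓝 y) := by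
    simpa using ((continuous_id.smul continuous_const).const_add y).tendsto (0 : ℝ)
  exact hline (hV.mem_nhds hy)

theorem LipschitzOnWith.isBigO_add_smul_sub {E F : Type*}
    [NormedAddCommGroup E] [NormedAddCommGroup F] [NormedSpace ℝ F]
    {f : F → E} {V : Set F} {K : NNReal} (hf : LipschitzOnWith K f V) (hV : IsOpen V)
    {y : F} (hy : y ∈ V) (v : F) :
    (fun t : ℝ => f (y + t • v) - f y) =O[𝓝 0] id := by
  refine IsBigO.of_bound (K * ‖v‖) ?_
  filter_upwards [hV.eventually_add_smul_mem hy v] with t ht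
  calc ‖f (y + t • v) - f y‖ ≤ K * ‖y + t • v - y‖ := by
        simpa [dist_eq_norm] using hf.dist_le_mul _ ht _ hy
    _ = K * ‖v‖ * ‖id t‖ := by rw [add_sub_cancel_left, norm_smul, id]; ring

theorem frechet_deriv_denseRange_general
    {X Y : Type*} [NormedAddCommGroup X] [NormedSpace ℝ X]
    [NormedAddCommGroup Y] [NormedSpace ℝ Y]
    {U : Set X} {V : Set Y}
    (hV : IsOpen V)
    (g : X → Y) (f : Y → X)
    (hgUV : Set.MapsTo g U V)
    (hfg : ∀ x ∈ U, f (g x) = x) (hgf : ∀ y ∈ V, g (f y) = y)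
    {x : X} (hx : x ∈ U) (dgx : X →L[ℝ] Y) (hdgx : HasFDerivAt g dgx x)
    {K : NNReal} (hf : LipschitzOnWith K f V) :
    DenseRange (dgx : X → Y) := by
  intro v
  have hgx : g x ∈ V := hgUV hx
  refine mem_closure_range_of_hasFDerivAt_of_lift hdgx (c := fun t => f (g x + t • v)) ?_ ?_
  · simpa only [hfg x hx] using hf.isBigO_add_smul_sub hV hgx v
  · filter_upwards [hV.eventually_add_smul_mem hgx v] with t ht
    exact hgf _ ht

/-- If `g : U → V` and `f : V → U` are inverse homeomorphisms, `g` is Fréchet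
differentiable at `x ∈ U` with derivative `dgx`, and `f` is Lipschitz on `V`, then the
image of `X` under `dgx` is dense in `Y`. -/
theorem frechet_deriv_denseRange
    {X Y : Type*} [NormedAddCommGroup X] [NormedSpace ℝ X] [CompleteSpace X]
    [NormedAddCommGroup Y] [NormedSpace ℝ Y] [CompleteSpace Y]
    {U : Set X} {V : Set Y} (hU : IsOpen U) (hUne : U.Nonempty)
    (hV : IsOpen V) (hVne : V.Nonempty)
    (g : X → Y) (f : Y → X)
    (hgc : ContinuousOn g U) (hfc : ContinuousOn f V)
    (hgUV : Set.MapsTo g U V) (hfVU : Set.MapsTo f V U)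
    (hfg : ∀ x ∈ U, f (g x) = x) (hgf : ∀ y ∈ V, g (f y) = y)
    {x : X} (hx : x ∈ U) (dgx : X →L[ℝ] Y) (hdgx : HasFDerivAt g dgx x)
    {K : NNReal} (hf : LipschitzOnWith K f V) :
    DenseRange (dgx : X → Y) :=
  frechet_deriv_denseRange_general hV g f hgUV hfg hgf hx dgx hdgx hf
end

section
/- Let X and Y be real Banach spaces, U ⊆ X and V ⊆ Y nonempty open subsets, and let g : U → V and f : V → U be inverse homeomorphisms. Let p be a natural number with p ≥ 1 (or p = ∞). Assume g is of class C^p on U (p times continuously Fréchet differentiable) and f is locally Lipschitz on V. Then f is of class C^p on V; in particular g and f are inverse C^p diffeomorphisms. -/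
/-!
At `y ∈ V` put `x = f y`. Since `f` is Lipschitz near `y` and `f ∘ g = id` near `x`, `g` is
anti-Lipschitz near `x`, so its derivative `g'` at `x` satisfies `‖v‖ ≤ K ‖g' v‖`: it is injective
with closed range. Feeding `y + s • z` through `g ∘ f = id` shows that every `z` is a limit of
values `g' (s⁻¹ • (f (y + s • z) - f y))`, so the range is also dense. Hence `g'` is an isomorphism
and the inverse function theorem for `C^p` maps makes `f` of class `C^p` at `y`.
-/

open Filter Topology Asymptotics

theorem LipschitzOnWith.isBigO_sub {α β : Type*} [SeminormedAddCommGroup α]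
    [SeminormedAddCommGroup β] {f : α → β} {K : NNReal} {s : Set α} {y : α}
    (hf : LipschitzOnWith K f s) (hs : s ∈ 𝓝 y) :
    (fun y' => f y' - f y) =O[𝓝 y] fun y' => y' - y := by
  refine IsBigO.of_bound K ?_
  filter_upwards [hs] with y' hy'
  simpa only [dist_eq_norm] using hf.dist_le_mul y' hy' y (mem_of_mem_nhds hs)

theorem ContinuousAt.of_isBigO_sub {α β : Type*} [NormedAddCommGroup α]
    [NormedAddCommGroup β] {f : α → β} {y : α}
    (hf : (fun y' => f y' - f y) =O[𝓝 y] fun y' => y' - y) : ContinuousAt f y :=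
  tendsto_sub_nhds_zero_iff.mp (hf.trans_tendsto (tendsto_sub_nhds_zero_iff.mpr tendsto_id))

section

variable {E F : Type*} [NormedAddCommGroup E] [NormedSpace ℝ E]
  [NormedAddCommGroup F] [NormedSpace ℝ F]

theorem HasFDerivAt.exists_antilipschitzWith {g : E → F} {g' : E →L[ℝ] F} {x : E}
    (hg : HasFDerivAt g g' x) (hinv : (fun x' => x' - x) =O[𝓝 x] fun x' => g x' - g x) :
    ∃ K, AntilipschitzWith K g' := by
  obtain ⟨c, hc⟩ := hinv.bound
  refine ⟨c.toNNReal, g'.antilipschitz_of_bound fun v => ?_⟩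
  have hpts : Tendsto (fun t : ℝ => x + t⁻¹ • v) atTop (𝓝 x) := by
    simpa using tendsto_const_nhds.add ((tendsto_inv_atTop_zero (𝕜 := ℝ)).smul_const v)
  have hv : ‖v‖ ≤ c * ‖g' v‖ := by
    refine ge_of_tendsto ((hg.lim_real v).norm.const_mul c) ?_
    filter_upwards [hpts.eventually hc, eventually_gt_atTop 0] with t ht htpos
    rw [add_sub_cancel_left, norm_smul, norm_inv, Real.norm_of_nonneg htpos.le] at ht
    rw [norm_smul, Real.norm_of_nonneg htpos.le, mul_left_comm]
    rwa [inv_mul_le_iff₀ htpos] at ht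
  exact hv.trans (mul_le_mul_of_nonneg_right (Real.le_coe_toNNReal c) (norm_nonneg _))

theorem HasFDerivAt.denseRange_of_rightInverse {g : E → F} {g' : E →L[ℝ] F} {f : F → E} {y : F}
    (hg : HasFDerivAt g g' (f y)) (hf : (fun y' => f y' - f y) =O[𝓝 y] fun y' => y' - y)
    (hgf : ∀ᶠ y' in 𝓝 y, g (f y') = y') : DenseRange g' := by
  have happrox : (fun y' => y' - y - g' (f y' - f y)) =o[𝓝 y] fun y' => y' - y := by
    refine ((hg.isLittleO.comp_tendsto (ContinuousAt.of_isBigO_sub hf)).trans_isBigO hf).congr'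
      ?_ EventuallyEq.rfl
    filter_upwards [hgf] with y' hy'
    simp [hy', hgf.self_of_nhds]
  intro z
  have hline : Tendsto (fun s : ℝ => y + s • z) (𝓝[≠] 0) (𝓝 y) := by
    simpa using (tendsto_const_nhds.add ((tendsto_id (x := 𝓝 (0 : ℝ))).smul_const z)).mono_left
      nhdsWithin_le_nhds
  have hsmall :
      (fun s : ℝ => y + s • z - y - g' (f (y + s • z) - f y)) =o[𝓝[≠] 0] fun s => s := by
    refine (happrox.comp_tendsto hline).trans_isBigO (IsBigO.of_bound ‖z‖ ?_)
    simp [norm_smul, mul_comm]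
  refine mem_closure_of_tendsto (b := 𝓝[≠] (0 : ℝ))
    (f := fun s => g' (s⁻¹ • (f (y + s • z) - f y))) ?_ (.of_forall fun s => Set.mem_range_self _)
  have hlim := hsmall.tendsto_inv_smul_nhds_zero.const_sub z
  rw [sub_zero] at hlim
  refine hlim.congr' ?_
  filter_upwards [self_mem_nhdsWithin] with s hs
  rw [add_sub_cancel_left, smul_sub, smul_smul, inv_mul_cancel₀ hs, one_smul, sub_sub_cancel,
    map_smul]

theorem OpenPartialHomeomorph.contDiffAt_symm_of_isBigO [CompleteSpace E] [CompleteSpace F]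
    (Φ : OpenPartialHomeomorph E F) {y : F} (hy : y ∈ Φ.target) {n : WithTop ℕ∞} (hn : n ≠ 0)
    (hΦ : ContDiffAt ℝ n Φ (Φ.symm y))
    (hlip : (fun y' => Φ.symm y' - Φ.symm y) =O[𝓝 y] fun y' => y' - y) :
    ContDiffAt ℝ n Φ.symm y := by
  have hx : Φ.symm y ∈ Φ.source := Φ.map_target hy
  have hg : HasFDerivAt Φ (fderiv ℝ Φ (Φ.symm y)) (Φ.symm y) :=
    (hΦ.differentiableAt hn).hasFDerivAt
  have hinv : (fun x' => x' - Φ.symm y) =O[𝓝 (Φ.symm y)] fun x' => Φ x' - Φ (Φ.symm y) := by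
    have hΦx : Tendsto Φ (𝓝 (Φ.symm y)) (𝓝 y) := by
      simpa only [ContinuousAt, Φ.right_inv hy] using Φ.continuousAt hx
    refine (hlip.comp_tendsto hΦx).congr' ?_ (.of_forall fun _ => by rw [Φ.right_inv hy]; rfl)
    filter_upwards [Φ.eventually_left_inverse hx] with x' hx'
    simp only [Function.comp_apply, hx']
  obtain ⟨K, hK⟩ := hg.exists_antilipschitzWith hinv
  have hdense : DenseRange (fderiv ℝ Φ (Φ.symm y)) :=
    hg.denseRange_of_rightInverse hlip (Φ.eventually_right_inverse hy)
  obtain ⟨hinj, hsurj⟩ := (fderiv ℝ Φ (Φ.symm y)).bijective_iff_dense_range_and_antilipschitz.mpr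
    ⟨Submodule.dense_iff_topologicalClosure_eq_top.mp hdense, K, hK⟩
  let e := ContinuousLinearEquiv.ofBijective _ (LinearMap.ker_eq_bot.mpr hinj)
    (LinearMap.range_eq_top.mpr hsurj)
  exact Φ.contDiffAt_symm (f₀' := e) hy (by rwa [ContinuousLinearEquiv.coe_ofBijective]) hΦ

end

theorem contDiffOn_inverse_of_locally_lipschitz_general
    {X Y : Type*} [NormedAddCommGroup X] [NormedSpace ℝ X] [CompleteSpace X]
    [NormedAddCommGroup Y] [NormedSpace ℝ Y] [CompleteSpace Y]
    {U : Set X} {V : Set Y} (hU : IsOpen U)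
    (g : X → Y) (f : Y → X)
    (hgUV : Set.MapsTo g U V) (hfVU : Set.MapsTo f V U)
    (hfg : ∀ x ∈ U, f (g x) = x) (hgf : ∀ y ∈ V, g (f y) = y)
    {p : ℕ∞} (hp : 1 ≤ p) (hg : ContDiffOn ℝ p g U)
    (hf : ∀ y ∈ V, ∃ t ⊆ V, IsOpen t ∧ y ∈ t ∧ ∃ K : NNReal, LipschitzOnWith K f t) :
    ContDiffOn ℝ p f V := by
  have hV : IsOpen V := isOpen_iff_forall_mem_open.mpr fun y hy => by
    obtain ⟨t, htV, ht, hyt, -⟩ := hf y hy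
    exact ⟨t, htV, ht, hyt⟩
  have hlip : ∀ y ∈ V, (fun y' => f y' - f y) =O[𝓝 y] fun y' => y' - y := fun y hy => by
    obtain ⟨t, -, ht, hyt, K, hK⟩ := hf y hy
    exact hK.isBigO_sub (ht.mem_nhds hyt)
  let Φ : OpenPartialHomeomorph X Y :=
    { toFun := g, invFun := f, source := U, target := V
      map_source' := hgUV, map_target' := hfVU, left_inv' := hfg, right_inv' := hgf
      open_source := hU, open_target := hV
      continuousOn_toFun := hg.continuousOn
      continuousOn_invFun := continuousOn_of_forall_continuousAt fun y hy =>
        ContinuousAt.of_isBigO_sub (hlip y hy) }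
  intro y hy
  exact (Φ.contDiffAt_symm_of_isBigO hy (by exact_mod_cast (one_pos.trans_le hp).ne')
    (hg.contDiffAt (hU.mem_nhds (hfVU hy))) (hlip y hy)).contDiffWithinAt

/-- Global converse of the inverse function theorem: if `g : U → V` and `f : V → U` are
inverse homeomorphisms between open subsets of Banach spaces, `g` is of class `C^p` on `U`
with `1 ≤ p`, and `f` is locally Lipschitz on `V`, then `f` is of class `C^p` on `V`
(so `g` and `f` are inverse `C^p` diffeomorphisms). -/
theorem contDiffOn_inverse_of_locally_lipschitz
    {X Y : Type*} [NormedAddCommGroup X] [NormedSpace ℝ X] [CompleteSpace X]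
    [NormedAddCommGroup Y] [NormedSpace ℝ Y] [CompleteSpace Y]
    {U : Set X} {V : Set Y} (hU : IsOpen U) (hUne : U.Nonempty)
    (hV : IsOpen V) (hVne : V.Nonempty)
    (g : X → Y) (f : Y → X)
    (hgc : ContinuousOn g U) (hfc : ContinuousOn f V)
    (hgUV : Set.MapsTo g U V) (hfVU : Set.MapsTo f V U)
    (hfg : ∀ x ∈ U, f (g x) = x) (hgf : ∀ y ∈ V, g (f y) = y)
    {p : ℕ∞} (hp : 1 ≤ p) (hg : ContDiffOn ℝ p g U)
    (hf : ∀ y ∈ V, ∃ t ⊆ V, IsOpen t ∧ y ∈ t ∧ ∃ K : NNReal, LipschitzOnWith K f t) :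
    ContDiffOn ℝ p f V :=
  contDiffOn_inverse_of_locally_lipschitz_general hU g f hgUV hfVU hfg hgf hp hg hf
end
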